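/- arXiv:0912.2507 — 2 statements merged into one kernel-verified Lean document; each statement's English description precedes it below -/
import Mathlib

section
/- Let χ be an integer, M(q) = ∏_{k≥1}(1−q^k)^{−k} over ℚ, N(q) = q (d/dq) log M(q), Δ = {(m₁,m₂,m₃) ∈ ℤ³_{≥0} : −m₃ ≤ m₁−m₂ < m₃}, and DT2(q) = (1/4)·M(q)^{2χ} − (χ/2)·{M(q)^χ · M(q)^χ · N(q)}_Δ. Then the coefficient of q² in DT2(q) minus (1/4) times the coefficient of q¹ in M(−q)^χ equals −χ. -/
open PowerSeries
open scoped Classical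

/-- The MacMahon function `M(q) = ∏_{k≥1} (1 − q^k)^{−k}` as a formal power series over
`ℚ`: its coefficient of `q^n` is the corresponding coefficient of the finite product
`∏_{k=1}^{n} (1 − q^k)^{−k}` (factors with `k > n` do not affect degrees `≤ n`). -/
noncomputable def MacMahon : PowerSeries ℚ :=
  PowerSeries.mk fun n =>
    PowerSeries.coeff n
      (∏ k ∈ Finset.Icc 1 n, ((1 - (PowerSeries.X : PowerSeries ℚ) ^ k)⁻¹) ^ k)

/-- `f^χ` for an integer exponent `χ` (for `f` with invertible constant term). -/
noncomputable def zpowPS (f : PowerSeries ℚ) (χ : ℤ) : PowerSeries ℚ :=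
  f ^ χ.toNat * f⁻¹ ^ (-χ).toNat

/-- `N(q) = q·(d/dq) log M(q) = q·M'(q)/M(q)`. -/
noncomputable def Nser : PowerSeries ℚ :=
  PowerSeries.X * PowerSeries.derivativeFun MacMahon * MacMahon⁻¹

/-- `{f₁·f₂·f₃}_Δ = ∑_{(n₁,n₂,n₃)∈Δ} a¹_{n₁} a²_{n₂} a³_{n₃} q^{n₁+n₂+n₃}` for a subset
`Δ ⊆ ℤ³_{≥0}` given by a predicate on `ℕ³`. -/
noncomputable def brace (P : ℕ → ℕ → ℕ → Prop) (f g h : PowerSeries ℚ) : PowerSeries ℚ :=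
  PowerSeries.mk fun n =>
    ∑ p ∈ (Finset.range (n + 1) ×ˢ Finset.range (n + 1) ×ˢ Finset.range (n + 1)).filter
        (fun p => p.1 + p.2.1 + p.2.2 = n ∧ P p.1 p.2.1 p.2.2),
      PowerSeries.coeff p.1 f * PowerSeries.coeff p.2.1 g * PowerSeries.coeff p.2.2 h

/-- `Δ = {(m₁,m₂,m₃) ∈ ℤ³_{≥0} : −m₃ ≤ m₁ − m₂ < m₃}`. -/
def DeltaP (m₁ m₂ m₃ : ℕ) : Prop :=
  -(m₃ : ℤ) ≤ (m₁ : ℤ) - (m₂ : ℤ) ∧ (m₁ : ℤ) - (m₂ : ℤ) < (m₃ : ℤ)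

/-- `DT2(q) = (1/4)·M(q)^{2χ} − (χ/2)·{M(q)^χ · M(q)^χ · N(q)}_Δ`. -/
noncomputable def DT2 (χ : ℤ) : PowerSeries ℚ :=
  ((1 : ℚ) / 4) • zpowPS MacMahon (2 * χ) -
    ((χ : ℚ) / 2) • brace DeltaP (zpowPS MacMahon χ) (zpowPS MacMahon χ) Nser

/-!
Only the coefficients of `q⁰, q¹, q²` matter. Every series involved has constant term `1`, and
for such series the coefficients of `q` and `q²` propagate through products, inverses, integer
powers and the logarithmic derivative `q f'/f` by explicit formulas. With
`M = 1 + q + 3q² + O(q³)`, hence `N = q + 5q² + O(q³)`, and `(0,1,1)`, `(0,0,2)` the only points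
of `Δ` of total degree `2`, the claim becomes a polynomial identity in `χ`.
-/

section SecondOrder

variable {R : Type*} [CommSemiring R] (f g : R⟦X⟧)

theorem coeff_one_mul_eq :
    coeff 1 (f * g) = coeff 0 f * coeff 1 g + coeff 1 f * coeff 0 g := by
  simp [coeff_mul, Finset.Nat.antidiagonal_succ]

theorem coeff_two_mul_eq :
    coeff 2 (f * g) = coeff 0 f * coeff 2 g + coeff 1 f * coeff 1 g + coeff 2 f * coeff 0 g := by
  simp [coeff_mul, Finset.Nat.antidiagonal_succ, add_assoc]

variable {f}

theorem coeff_one_pow_eq (hf : constantCoeff f = 1) (n : ℕ) :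
    coeff 1 (f ^ n) = n * coeff 1 f := by
  induction n with
  | zero => simp
  | succ n ih =>
    rw [pow_succ, coeff_one_mul_eq, ih, coeff_zero_eq_constantCoeff_apply, map_pow, hf,
      coeff_zero_eq_constantCoeff_apply, hf]
    push_cast; ring

theorem coeff_two_pow_eq (hf : constantCoeff f = 1) (n : ℕ) :
    coeff 2 (f ^ n) = n * coeff 2 f + n.choose 2 * coeff 1 f ^ 2 := by
  induction n with
  | zero => simp
  | succ n ih =>
    rw [pow_succ, coeff_two_mul_eq, ih, coeff_one_pow_eq hf, coeff_zero_eq_constantCoeff_apply,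
      map_pow, hf, coeff_zero_eq_constantCoeff_apply, hf,
      Nat.choose_succ_succ', Nat.choose_one_right]
    push_cast; ring

end SecondOrder

section Field

variable {k : Type*} [Field k] {f : k⟦X⟧}

theorem coeff_one_inv_eq (hf : constantCoeff f = 1) : coeff 1 f⁻¹ = -coeff 1 f := by
  have h := congrArg (coeff 1) (PowerSeries.mul_inv_cancel f (by simp [hf]))
  rw [coeff_one_mul_eq, coeff_zero_eq_constantCoeff_apply, coeff_zero_eq_constantCoeff_apply,
    constantCoeff_inv, hf, coeff_one] at h
  simp only [one_mul, inv_one, mul_one, one_ne_zero, ↓reduceIte] at h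
  linear_combination h

theorem coeff_two_inv_eq (hf : constantCoeff f = 1) :
    coeff 2 f⁻¹ = coeff 1 f ^ 2 - coeff 2 f := by
  have h := congrArg (coeff 2) (PowerSeries.mul_inv_cancel f (by simp [hf]))
  rw [coeff_two_mul_eq, coeff_one_inv_eq hf, coeff_zero_eq_constantCoeff_apply,
    coeff_zero_eq_constantCoeff_apply, constantCoeff_inv, hf, coeff_one] at h
  simp only [one_mul, mul_neg, inv_one, mul_one, OfNat.ofNat_ne_zero, ↓reduceIte] at h
  linear_combination h

theorem coeff_one_X_mul_derivative_mul_inv (hf : constantCoeff f = 1) :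
    coeff 1 (X * d⁄dX k f * f⁻¹) = coeff 1 f := by
  rw [mul_assoc, coeff_succ_X_mul, coeff_zero_eq_constantCoeff_apply, map_mul,
    constantCoeff_inv, hf, ← coeff_zero_eq_constantCoeff_apply, coeff_derivative]
  simp

theorem coeff_two_X_mul_derivative_mul_inv (hf : constantCoeff f = 1) :
    coeff 2 (X * d⁄dX k f * f⁻¹) = 2 * coeff 2 f - coeff 1 f ^ 2 := by
  rw [mul_assoc, coeff_succ_X_mul, coeff_one_mul_eq, coeff_one_inv_eq hf,
    coeff_zero_eq_constantCoeff_apply f⁻¹, constantCoeff_inv, hf, coeff_derivative,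
    coeff_derivative]
  ring

end Field

section ZPow

theorem zpowPS_natCast (f : ℚ⟦X⟧) (n : ℕ) : zpowPS f n = f ^ n := by
  simp [zpowPS]

theorem zpowPS_neg_natCast (f : ℚ⟦X⟧) (n : ℕ) : zpowPS f (-n) = f⁻¹ ^ n := by
  simp [zpowPS]

variable {f : ℚ⟦X⟧}

theorem constantCoeff_zpowPS (hf : constantCoeff f = 1) (χ : ℤ) :
    constantCoeff (zpowPS f χ) = 1 := by
  simp [zpowPS, hf]

theorem coeff_one_zpowPS (hf : constantCoeff f = 1) (χ : ℤ) :
    coeff 1 (zpowPS f χ) = χ * coeff 1 f := by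
  obtain ⟨n, rfl | rfl⟩ := Int.eq_nat_or_neg χ
  · rw [zpowPS_natCast, coeff_one_pow_eq hf, Int.cast_natCast]
  · rw [zpowPS_neg_natCast, coeff_one_pow_eq (by simp [hf]), coeff_one_inv_eq hf]
    push_cast; ring

theorem coeff_two_zpowPS (hf : constantCoeff f = 1) (χ : ℤ) :
    coeff 2 (zpowPS f χ) = χ * coeff 2 f + χ * (χ - 1) / 2 * coeff 1 f ^ 2 := by
  obtain ⟨n, rfl | rfl⟩ := Int.eq_nat_or_neg χ
  · rw [zpowPS_natCast, coeff_two_pow_eq hf, Nat.cast_choose_two, Int.cast_natCast]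
  · rw [zpowPS_neg_natCast, coeff_two_pow_eq (by simp [hf]), coeff_one_inv_eq hf,
      coeff_two_inv_eq hf, Nat.cast_choose_two]
    push_cast; ring

end ZPow

theorem constantCoeff_MacMahon : constantCoeff MacMahon = 1 := by
  simp [← coeff_zero_eq_constantCoeff_apply, MacMahon]

theorem coeff_one_MacMahon : coeff 1 MacMahon = 1 := by
  have h : constantCoeff (1 - X : ℚ⟦X⟧) = 1 := by simp
  rw [MacMahon, coeff_mk, show Finset.Icc 1 1 = {1} from rfl, Finset.prod_singleton, pow_one,
    pow_one, coeff_one_inv_eq h]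
  simp

theorem coeff_two_MacMahon : coeff 2 MacMahon = 3 := by
  have h₁ : constantCoeff (1 - X : ℚ⟦X⟧) = 1 := by simp
  have h₂ : constantCoeff (1 - X ^ 2 : ℚ⟦X⟧) = 1 := by simp
  have h₂' : constantCoeff (1 - X ^ 2 : ℚ⟦X⟧)⁻¹ = 1 := by simp [h₂]
  rw [MacMahon, coeff_mk, show Finset.Icc 1 2 = {1, 2} from rfl, Finset.prod_pair (by decide),
    pow_one, pow_one, coeff_two_mul_eq, coeff_two_pow_eq h₂', coeff_one_pow_eq h₂',
    coeff_zero_eq_constantCoeff_apply, coeff_zero_eq_constantCoeff_apply, map_pow, h₂',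
    constantCoeff_inv, h₁, coeff_one_inv_eq h₁, coeff_two_inv_eq h₁, coeff_one_inv_eq h₂,
    coeff_two_inv_eq h₂]
  norm_num [coeff_one, coeff_X, coeff_X_pow]

theorem Nser_eq : Nser = X * d⁄dX ℚ MacMahon * MacMahon⁻¹ := rfl

theorem coeff_two_brace_DeltaP (f g h : ℚ⟦X⟧) :
    coeff 2 (brace DeltaP f g h) =
      coeff 0 f * coeff 1 g * coeff 1 h + coeff 0 f * coeff 0 g * coeff 2 h := by
  rw [brace, coeff_mk, Finset.sum_filter]
  norm_num [Finset.sum_product, Finset.sum_range_succ, DeltaP]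
  ring

/-- the coefficient of `q²` in `DT2(q)` minus `(1/4)` times the coefficient
of `q¹` in `M(−q)^χ` equals `−χ`. -/
theorem stmt9 (χ : ℤ) :
    PowerSeries.coeff 2 (DT2 χ) -
        (1 / 4 : ℚ) * PowerSeries.coeff 1 (zpowPS (PowerSeries.rescale (-1) MacMahon) χ) =
      -(χ : ℚ) := by
  have hM := constantCoeff_MacMahon
  have hM' : constantCoeff (rescale (-1) MacMahon) = 1 := by
    rw [← coeff_zero_eq_constantCoeff_apply, coeff_rescale, pow_zero, one_mul,
      coeff_zero_eq_constantCoeff_apply, hM]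
  rw [DT2, map_sub, map_smul, map_smul, smul_eq_mul, smul_eq_mul, coeff_two_brace_DeltaP,
    coeff_zero_eq_constantCoeff_apply, constantCoeff_zpowPS hM, coeff_two_zpowPS hM,
    coeff_one_zpowPS hM, coeff_one_zpowPS hM', coeff_rescale, Nser_eq,
    coeff_one_X_mul_derivative_mul_inv hM, coeff_two_X_mul_derivative_mul_inv hM,
    coeff_one_MacMahon, coeff_two_MacMahon]
  push_cast; ring
end

section
/- Let χ be an integer, M(q) = ∏_{k≥1}(1−q^k)^{−k} over ℚ, N(q) = q (d/dq) log M(q), Δ = {(m₁,m₂,m₃) ∈ ℤ³_{≥0} : −m₃ ≤ m₁−m₂ < m₃}, and DT2(q) = (1/4)·M(q)^{2χ} − (χ/2)·{M(q)^χ · M(q)^χ · N(q)}_Δ. Then the coefficient of q³ in DT2(q) equals −(χ³ + 15χ² + 20χ)/6. -/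
/-!
Only coefficients of degree `≤ 3` matter. If `f = 1 + a q + b q² + c q³ + O(q⁴)`, the first
coefficients of `f ^ m` are polynomials in `m`, and since `f⁻¹` again has this shape the same
polynomials give `f ^ χ` for negative `χ`. From `M = 1 + q + 3q² + 6q³ + O(q⁴)` one gets
`N = q + 5q² + 10q³ + O(q⁴)`, and the weight-3 triples in `Δ` are `(1,1,1)`, `(0,1,2)`,
`(1,0,2)`, `(0,0,3)`, so `{M^χ · M^χ · N}_Δ` has `q³`-coefficient `χ² + 10χ + 10`.
-/

open PowerSeries
open scoped Classical

section LowCoeffs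

variable {R : Type*} [CommSemiring R]

def HasLowCoeffs (f : R⟦X⟧) (c₀ c₁ c₂ c₃ : R) : Prop :=
  coeff 0 f = c₀ ∧ coeff 1 f = c₁ ∧ coeff 2 f = c₂ ∧ coeff 3 f = c₃

theorem HasLowCoeffs.mul {f g : R⟦X⟧} {a₀ a₁ a₂ a₃ b₀ b₁ b₂ b₃ : R}
    (hf : HasLowCoeffs f a₀ a₁ a₂ a₃) (hg : HasLowCoeffs g b₀ b₁ b₂ b₃) :
    HasLowCoeffs (f * g) (a₀ * b₀) (a₀ * b₁ + a₁ * b₀) (a₀ * b₂ + a₁ * b₁ + a₂ * b₀)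
      (a₀ * b₃ + a₁ * b₂ + a₂ * b₁ + a₃ * b₀) := by
  obtain ⟨f₀, f₁, f₂, f₃⟩ := hf
  obtain ⟨g₀, g₁, g₂, g₃⟩ := hg
  simp only [HasLowCoeffs, coeff_mul, Finset.Nat.sum_antidiagonal_eq_sum_range_succ_mk,
    Finset.sum_range_succ, Finset.sum_range_zero]
  simp [f₀, f₁, f₂, f₃, g₀, g₁, g₂, g₃, add_assoc]

set_option linter.deprecated false in
theorem HasLowCoeffs.X_mul_derivativeFun {f : R⟦X⟧} {c₀ c₁ c₂ c₃ : R}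
    (hf : HasLowCoeffs f c₀ c₁ c₂ c₃) :
    HasLowCoeffs (X * derivativeFun f) 0 c₁ (2 * c₂) (3 * c₃) := by
  have coeff_succ (n : ℕ) : coeff (n + 1) (X * derivativeFun f) = coeff (n + 1) f * (n + 1) := by
    rw [coeff_succ_X_mul]
    exact coeff_derivative f n
  obtain ⟨-, h₁, h₂, h₃⟩ := hf
  refine ⟨by simp, ?_, ?_, ?_⟩
  · rw [(coeff_succ 0 : coeff 1 _ = _), h₁]
    norm_num
  · rw [(coeff_succ 1 : coeff 2 _ = _), h₂]
    norm_num [mul_comm]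
  · rw [(coeff_succ 2 : coeff 3 _ = _), h₃]
    norm_num [mul_comm]

end LowCoeffs

section Field

variable {K : Type*} [Field K]

theorem HasLowCoeffs.inv {f : K⟦X⟧} {a b c : K} (hf : HasLowCoeffs f 1 a b c) :
    HasLowCoeffs f⁻¹ 1 (-a) (a ^ 2 - b) (-a ^ 3 + 2 * a * b - c) := by
  have hf0 : constantCoeff f ≠ 0 := by
    rw [← coeff_zero_eq_constantCoeff_apply, hf.1]
    exact one_ne_zero
  have g0 : coeff 0 f⁻¹ = 1 := by
    rw [coeff_zero_eq_constantCoeff_apply, constantCoeff_inv, ← coeff_zero_eq_constantCoeff_apply,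
      hf.1, inv_one]
  obtain ⟨-, e₁, e₂, e₃⟩ := PowerSeries.mul_inv_cancel f hf0 ▸ hf.mul ⟨g0, rfl, rfl, rfl⟩
  simp only [coeff_one, one_mul, mul_one, one_ne_zero, OfNat.ofNat_ne_zero, if_false] at e₁ e₂ e₃
  exact ⟨g0, by linear_combination -e₁, by linear_combination -e₂ + a * e₁,
    by linear_combination -e₃ + a * e₂ - (a ^ 2 - b) * e₁⟩

theorem HasLowCoeffs.pow [CharZero K] {f : K⟦X⟧} {a b c : K} (hf : HasLowCoeffs f 1 a b c)
    (m : ℕ) :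
    HasLowCoeffs (f ^ m) 1 (m * a) (m * b + m * (m - 1) / 2 * a ^ 2)
      (m * c + m * (m - 1) * a * b + m * (m - 1) * (m - 2) / 6 * a ^ 3) := by
  induction m with
  | zero => simp [HasLowCoeffs, coeff_one]
  | succ m ih =>
    obtain ⟨h₀, h₁, h₂, h₃⟩ := pow_succ f m ▸ ih.mul hf
    refine ⟨by simpa using h₀, ?_, ?_, ?_⟩ <;> push_cast
    · rw [h₁]; ring
    · rw [h₂]; ring
    · rw [h₃]; ring

end Field

theorem HasLowCoeffs.zpowPS {f : ℚ⟦X⟧} {a b c : ℚ} (hf : HasLowCoeffs f 1 a b c) (χ : ℤ) :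
    HasLowCoeffs (zpowPS f χ) 1 (χ * a) (χ * b + χ * (χ - 1) / 2 * a ^ 2)
      (χ * c + χ * (χ - 1) * a * b + χ * (χ - 1) * (χ - 2) / 6 * a ^ 3) := by
  obtain ⟨m, rfl | rfl⟩ := Int.eq_nat_or_neg χ
  · simpa [_root_.zpowPS] using hf.pow m
  · obtain ⟨h₀, h₁, h₂, h₃⟩ := hf.inv.pow m
    simp only [_root_.zpowPS, neg_neg, Int.toNat_natCast, Int.toNat_neg_natCast, pow_zero, one_mul]
    refine ⟨h₀, ?_, ?_, ?_⟩ <;> push_cast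
    · rw [h₁]; ring
    · rw [h₂]; ring
    · rw [h₃]; ring

theorem macMahon_hasLowCoeffs : HasLowCoeffs MacMahon 1 1 3 6 := by
  have one_sub_X_pow (k : ℕ) (hk : k ≠ 0) : HasLowCoeffs (1 - X ^ k : ℚ⟦X⟧) 1
      (-if k = 1 then 1 else 0) (-if k = 2 then 1 else 0) (-if k = 3 then 1 else 0) := by
    refine ⟨?_, ?_, ?_, ?_⟩ <;> simp [coeff_X_pow, coeff_one, eq_comm, hk]
  have g₁ := (one_sub_X_pow 1 one_ne_zero).inv.pow 1
  have g₂ := (one_sub_X_pow 2 two_ne_zero).inv.pow 2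
  have g₃ := (one_sub_X_pow 3 three_ne_zero).inv.pow 3
  norm_num at g₁ g₂ g₃
  have p₁ : HasLowCoeffs (∏ k ∈ Finset.Icc 1 1, ((1 - X ^ k : ℚ⟦X⟧)⁻¹) ^ k) 1 1 1 1 := by
    simpa using g₁
  have p₂ : HasLowCoeffs (∏ k ∈ Finset.Icc 1 2, ((1 - X ^ k : ℚ⟦X⟧)⁻¹) ^ k) 1 1 3 3 := by
    rw [Finset.prod_Icc_succ_top (by norm_num)]
    convert p₁.mul g₂ using 1 <;> norm_num
  have p₃ : HasLowCoeffs (∏ k ∈ Finset.Icc 1 3, ((1 - X ^ k : ℚ⟦X⟧)⁻¹) ^ k) 1 1 3 6 := by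
    rw [Finset.prod_Icc_succ_top (by norm_num)]
    convert p₂.mul g₃ using 1 <;> norm_num
  exact ⟨by simp [MacMahon], by simpa [MacMahon] using p₁.2.1, by simpa [MacMahon] using p₂.2.2.1,
    by simpa [MacMahon] using p₃.2.2.2⟩

theorem nser_hasLowCoeffs : HasLowCoeffs Nser 0 1 5 10 := by
  rw [Nser]
  convert macMahon_hasLowCoeffs.X_mul_derivativeFun.mul macMahon_hasLowCoeffs.inv using 1 <;>
    norm_num

theorem coeff_three_brace_deltaP (f g h : ℚ⟦X⟧) :
    coeff 3 (brace DeltaP f g h) =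
      coeff 1 f * coeff 1 g * coeff 1 h + coeff 0 f * coeff 1 g * coeff 2 h +
        coeff 1 f * coeff 0 g * coeff 2 h + coeff 0 f * coeff 0 g * coeff 3 h := by
  simp only [brace, coeff_mk, Finset.sum_filter, Finset.sum_product, Finset.sum_range_succ,
    Finset.sum_range_zero]
  norm_num [DeltaP]
  ring

/-- the coefficient of `q³` in `DT2(q)` equals `−(χ³ + 15χ² + 20χ)/6`. -/
theorem stmt10 (χ : ℤ) :
    PowerSeries.coeff 3 (DT2 χ) =
      -(((χ : ℚ) ^ 3 + 15 * (χ : ℚ) ^ 2 + 20 * (χ : ℚ)) / 6) := by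
  obtain ⟨-, -, -, hM₃⟩ := macMahon_hasLowCoeffs.zpowPS (2 * χ)
  obtain ⟨hm₀, hm₁, -, -⟩ := macMahon_hasLowCoeffs.zpowPS χ
  obtain ⟨-, hN₁, hN₂, hN₃⟩ := nser_hasLowCoeffs
  rw [DT2, map_sub, map_smul, map_smul, hM₃, coeff_three_brace_deltaP, hm₀, hm₁, hN₁, hN₂, hN₃,
    smul_eq_mul, smul_eq_mul]
  push_cast
  ring
end
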